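/- arXiv:2206.04914 — 3 statements merged into one kernel-verified Lean document; each statement's English description precedes it below -/
import Mathlib

section
/- Let λ_D > λ_N > 0, τ > 0, α > 0 be real numbers. Define g(s) = ((1 − λ_D/λ_N) s² − τα/λ_N)/(λ_D s² + 2 λ_N s + λ_N + τα) for s ≥ 0. Then g attains its supremum over ℝ at s₂ = τα/(λ_D − λ_N), and g(s₂) = − τα(λ_D − λ_N)/(λ_N (τα λ_D + λ_N(λ_D − λ_N))). -/
/-!
Write `c = λ_D − λ_N` and `t = τα`. Clearing the inner fractions,
`g s = −(c s² + t) / (λ_N q(s))` with `q(s) = λ_D s² + 2λ_N s + λ_N + t`, which is positive since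
`λ_D q(s) = (λ_D s + λ_N)² + λ_N c + λ_D t`. Cross-multiplying, `g s ≤ g(t / c)` is the identity
`(c s² + t)(t λ_D + λ_N c) − t c q(s) = λ_N (c s − t)²`, whose right side vanishes only at `s = t / c`.
-/

namespace RobinNeumann

noncomputable def ratio (lamD lamN t s : ℝ) : ℝ :=
  ((1 - lamD / lamN) * s ^ 2 - t / lamN) / (lamD * s ^ 2 + 2 * lamN * s + lamN + t)

variable {lamD lamN t : ℝ}

lemma ratio_denom_pos (hN : 0 < lamN) (hDN : lamN < lamD) (ht : 0 ≤ t) (s : ℝ) :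
    0 < lamD * s ^ 2 + 2 * lamN * s + lamN + t := by
  have hD : 0 < lamD := hN.trans hDN
  have hsq : lamD * (lamD * s ^ 2 + 2 * lamN * s + lamN + t) =
      (lamD * s + lamN) ^ 2 + lamN * (lamD - lamN) + lamD * t := by ring
  have : 0 < lamD * (lamD * s ^ 2 + 2 * lamN * s + lamN + t) := by
    rw [hsq]
    nlinarith [sq_nonneg (lamD * s + lamN), mul_pos hN (sub_pos.mpr hDN), mul_nonneg hD.le ht]
  exact pos_of_mul_pos_right this hD.le

lemma critical_denom_pos (hN : 0 < lamN) (hDN : lamN < lamD) (ht : 0 ≤ t) :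
    0 < t * lamD + lamN * (lamD - lamN) := by
  nlinarith [mul_pos hN (sub_pos.mpr hDN), mul_nonneg ht (hN.trans hDN).le]

lemma ratio_eq (hN : 0 < lamN) (s : ℝ) :
    ratio lamD lamN t s =
      -((lamD - lamN) * s ^ 2 + t) / (lamN * (lamD * s ^ 2 + 2 * lamN * s + lamN + t)) := by
  rw [ratio, ← div_div]
  congr 1
  field_simp
  ring

lemma ratio_critical (hN : 0 < lamN) (hDN : lamN < lamD) (ht : 0 ≤ t) :
    ratio lamD lamN t (t / (lamD - lamN)) =
      -(t * (lamD - lamN)) / (lamN * (t * lamD + lamN * (lamD - lamN))) := by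
  have hc : lamD - lamN ≠ 0 := (sub_pos.mpr hDN).ne'
  have hq := ratio_denom_pos hN hDN ht (t / (lamD - lamN))
  have hv := critical_denom_pos hN hDN ht
  rw [ratio_eq hN, div_eq_div_iff (mul_pos hN hq).ne' (mul_pos hN hv).ne']
  field_simp
  ring

lemma ratio_le_ratio_critical (hN : 0 < lamN) (hDN : lamN < lamD) (ht : 0 ≤ t) (s : ℝ) :
    ratio lamD lamN t s ≤ ratio lamD lamN t (t / (lamD - lamN)) := by
  have hq := ratio_denom_pos hN hDN ht s
  have hv := critical_denom_pos hN hDN ht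
  rw [ratio_critical hN hDN ht, ratio_eq hN, div_le_div_iff₀ (mul_pos hN hq) (mul_pos hN hv)]
  have key : -(t * (lamD - lamN)) * (lamN * (lamD * s ^ 2 + 2 * lamN * s + lamN + t)) -
      -((lamD - lamN) * s ^ 2 + t) * (lamN * (t * lamD + lamN * (lamD - lamN))) =
      lamN ^ 2 * ((lamD - lamN) * s - t) ^ 2 := by ring
  linarith [mul_nonneg (sq_nonneg lamN) (sq_nonneg ((lamD - lamN) * s - t))]

end RobinNeumann

/-- For `λ_D > λ_N > 0`, `τ > 0`, `α > 0`, the function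
`g(s) = ((1 − λ_D/λ_N) s² − τα/λ_N)/(λ_D s² + 2 λ_N s + λ_N + τα)`
attains its supremum over `ℝ` at `s₂ = τα/(λ_D − λ_N)`, with
`g(s₂) = − τα(λ_D − λ_N)/(λ_N (τα λ_D + λ_N(λ_D − λ_N)))`. -/
theorem sup_robin_neumann (lamD lamN τ α : ℝ) (hN : 0 < lamN) (hDN : lamN < lamD)
    (hτ : 0 < τ) (hα : 0 < α)
    (g : ℝ → ℝ)
    (hg : ∀ s, g s = ((1 - lamD / lamN) * s ^ 2 - τ * α / lamN) /
        (lamD * s ^ 2 + 2 * lamN * s + lamN + τ * α))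
    (s₂ : ℝ) (hs₂ : s₂ = τ * α / (lamD - lamN)) :
    IsGreatest (Set.range g) (g s₂) ∧
      g s₂ = -(τ * α * (lamD - lamN)) /
        (lamN * (τ * α * lamD + lamN * (lamD - lamN))) := by
  have ht : 0 ≤ τ * α := (mul_pos hτ hα).le
  obtain rfl : g = RobinNeumann.ratio lamD lamN (τ * α) := funext hg
  subst hs₂
  refine ⟨⟨⟨_, rfl⟩, ?_⟩, RobinNeumann.ratio_critical hN hDN ht⟩
  rintro _ ⟨s, rfl⟩
  exact RobinNeumann.ratio_le_ratio_critical hN hDN ht s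
end

section
/- Let V be an n-dimensional real inner product space with orthonormal basis e_1,…,e_n, and W an m-dimensional inner product space with orthonormal basis f_1,…,f_m. Let II : V × V → W be a symmetric bilinear map, and for N ∈ W let II_N : V → V be the symmetric endomorphism with ⟨II_N X, Y⟩ = ⟨N, II(X,Y)⟩. Define the curvature R(X,Y)Z = −Σ_a ⟨II_{f_a} X, Z⟩ II_{f_a} Y + Σ_a ⟨II_{f_a} Y, Z⟩ II_{f_a} X (Gauss equation with flat ambient space) extended as a derivation to p-forms. Then for every p-form ω and X ∈ V: Σ_{s=1}^n e_s ⌟ (R(e_s, X)·ω) = − Σ_{a=1}^m II_{f_a}(X) ⌟ (II_{f_a}^{[p]} ω) + II_{nH̃}(X) ⌟ ω, where nH̃ = Σ_a (tr II_{f_a}) f_a and R(X,Y)·ω denotes the induced action of the curvature endomorphism on p-forms. -/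
/-!
Split the derivation action into the slot carrying `e_s` and the remaining `p` slots.
Contracting the Gauss equation gives `∑_s R(e_s, X) e_s = -II_{nH̃} X + ∑_a II_{f_a}² X`, which
accounts for the first slot. For each other slot, `B(x, y) = ω(x, …, y, …)` is antisymmetric and
the shape operators are symmetric, so `∑_s B(e_s, II_a e_s) = 0` and
`∑_s ⟨II_a e_s, Y⟩ B(e_s, II_a X) = B(II_a X, II_a Y)`: these are exactly the remaining slots of
`II_a^{[p+1]} ω` evaluated at `(II_a X, v)`.
-/

open scoped RealInnerProductSpace

namespace AlternatingMap

variable {R M N : Type*} [CommRing R] [AddCommGroup M] [Module R M] [AddCommGroup N] [Module R N]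
  {p : ℕ}

def consUpdate (ω : M [⋀^Fin (p + 1)]→ₗ[R] N) (v : Fin p → M) (i : Fin p) (x : M) :
    M →ₗ[R] N :=
  ω.toMultilinearMap.toLinearMap (Fin.cons x v) i.succ

theorem consUpdate_apply (ω : M [⋀^Fin (p + 1)]→ₗ[R] N) (v : Fin p → M) (i : Fin p) (x y : M) :
    ω.consUpdate v i x y = ω (Function.update (Fin.cons x v) i.succ y) :=
  rfl

theorem consUpdate_swap (ω : M [⋀^Fin (p + 1)]→ₗ[R] N) (v : Fin p → M) (i : Fin p) (x y : M) :
    ω.consUpdate v i x y = -ω.consUpdate v i y x := by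
  have hswap : (Function.update (Fin.cons x v) i.succ y ∘ Equiv.swap 0 i.succ : Fin (p + 1) → M) =
      Function.update (Fin.cons y v) i.succ x := by
    ext k
    cases k using Fin.cases with
    | zero => simp [(Fin.succ_ne_zero i).symm]
    | succ k =>
      by_cases hk : k = i <;> simp [Equiv.swap_apply_def, hk, (Fin.succ_ne_zero i).symm]
  rw [consUpdate_apply, consUpdate_apply, ← hswap, ω.map_swap _ (Fin.succ_ne_zero i).symm, neg_neg]

theorem sum_update_cons (ω : M [⋀^Fin (p + 1)]→ₗ[R] N) (T : M → M) (x : M) (v : Fin p → M) :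
    ∑ j, ω (Function.update (Fin.cons x v : Fin (p + 1) → M) j
        (T ((Fin.cons x v : Fin (p + 1) → M) j))) =
      ω (Fin.cons (T x) v) + ∑ i, ω.consUpdate v i x (T (v i)) := by
  rw [Fin.sum_univ_succ, Fin.cons_zero, Fin.update_cons_zero]
  simp only [Fin.cons_succ, consUpdate_apply]

end AlternatingMap

namespace OrthonormalBasis

variable {ι V E : Type*} [Fintype ι] [NormedAddCommGroup V] [InnerProductSpace ℝ V]
  [AddCommGroup E] [Module ℝ E]

theorem sum_inner_smul_map (e : OrthonormalBasis ι ℝ V) (φ : V →ₗ[ℝ] E) (y : V) :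
    ∑ s, ⟪e s, y⟫ • φ (e s) = φ y := by
  simp_rw [← map_smul, ← map_sum, e.sum_repr']

theorem sum_antisymm_apply_isSymmetric_eq_zero (e : OrthonormalBasis ι ℝ V) {A : V →ₗ[ℝ] V}
    (hA : A.IsSymmetric) {B : V → V →ₗ[ℝ] E} (hB : ∀ x y, B x y = -B y x) :
    ∑ s, B (e s) (A (e s)) = 0 := by
  set c := ∑ s, B (e s) (A (e s))
  have hc : c = -c := calc
    c = ∑ s, ∑ t, ⟪e t, A (e s)⟫ • B (e s) (e t) := by simp only [c, e.sum_inner_smul_map]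
    _ = ∑ t, ∑ s, -(⟪e s, A (e t)⟫ • B (e t) (e s)) := by
      rw [Finset.sum_comm]
      refine Finset.sum_congr rfl fun t _ => Finset.sum_congr rfl fun s _ => ?_
      rw [hB, ← hA, real_inner_comm, smul_neg]
    _ = -c := by simp only [c, Finset.sum_neg_distrib, e.sum_inner_smul_map]
  have h2c : (2 : ℝ) • c = 0 := by rw [two_smul]; nth_rewrite 2 [hc]; exact add_neg_cancel c
  exact (smul_eq_zero.mp h2c).resolve_left two_ne_zero

end OrthonormalBasis

section GaussEquation

variable {ι κ V W E : Type*} [Fintype ι] [Fintype κ]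
  [NormedAddCommGroup V] [InnerProductSpace ℝ V] [NormedAddCommGroup W] [InnerProductSpace ℝ W]
  [AddCommGroup E] [Module ℝ E] {II : V →ₗ[ℝ] V →ₗ[ℝ] W} {S : W → V →ₗ[ℝ] V}
  {R : V → V → V →ₗ[ℝ] V}

theorem isSymmetric_shape (hII : ∀ X Y, II X Y = II Y X)
    (hS : ∀ N X Y, ⟪S N X, Y⟫ = ⟪N, II X Y⟫) (N : W) : (S N).IsSymmetric := fun X Y => by
  rw [hS, hII, ← hS, real_inner_comm]

theorem shape_apply_eq_sum (f : OrthonormalBasis κ ℝ W) (hS : ∀ N X Y, ⟪S N X, Y⟫ = ⟪N, II X Y⟫)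
    (N : W) (X : V) : S N X = ∑ a, ⟪f a, N⟫ • S (f a) X := by
  refine ext_inner_right ℝ fun Y => ?_
  simp only [sum_inner, real_inner_smul_left, hS]
  rw [← f.sum_inner_mul_inner]
  simp only [real_inner_comm N]

theorem sum_curvature_apply_self (e : OrthonormalBasis ι ℝ V) (f : OrthonormalBasis κ ℝ W)
    (hS : ∀ N X Y, ⟪S N X, Y⟫ = ⟪N, II X Y⟫)
    (hR : ∀ X Y Z : V, R X Y Z =
      -∑ a, ⟪S (f a) X, Z⟫ • S (f a) Y + ∑ a, ⟪S (f a) Y, Z⟫ • S (f a) X) (X : V) :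
    ∑ s, R (e s) X (e s) = -S (∑ s, II (e s) (e s)) X + ∑ a, S (f a) (S (f a) X) := by
  simp only [hR, Finset.sum_add_distrib, Finset.sum_neg_distrib]
  rw [Finset.sum_comm (γ := ι), Finset.sum_comm (γ := ι),
    shape_apply_eq_sum f hS (∑ s, II (e s) (e s))]
  congr 1
  · rw [neg_inj]
    refine Finset.sum_congr rfl fun a _ => ?_
    rw [← Finset.sum_smul, inner_sum]
    simp only [hS]
  · refine Finset.sum_congr rfl fun a _ => ?_
    rw [← e.sum_inner_smul_map (S (f a)) (S (f a) X)]
    simp only [real_inner_comm (e _)]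

theorem sum_antisymm_apply_curvature (e : OrthonormalBasis ι ℝ V) (f : OrthonormalBasis κ ℝ W)
    (hII : ∀ X Y, II X Y = II Y X) (hS : ∀ N X Y, ⟪S N X, Y⟫ = ⟪N, II X Y⟫)
    (hR : ∀ X Y Z : V, R X Y Z =
      -∑ a, ⟪S (f a) X, Z⟫ • S (f a) Y + ∑ a, ⟪S (f a) Y, Z⟫ • S (f a) X)
    {B : V → V →ₗ[ℝ] E} (hB : ∀ x y, B x y = -B y x) (X Y : V) :
    ∑ s, B (e s) (R (e s) X Y) = ∑ a, B (S (f a) X) (S (f a) Y) := by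
  have hsymm := isSymmetric_shape hII hS
  simp only [hR, map_add, map_neg, map_sum, map_smul, Finset.sum_add_distrib,
    Finset.sum_neg_distrib]
  rw [Finset.sum_comm (γ := ι), Finset.sum_comm (γ := ι)]
  have htrace : ∀ a, ∑ s, ⟪S (f a) X, Y⟫ • B (e s) (S (f a) (e s)) = 0 := fun a => by
    rw [← Finset.smul_sum, e.sum_antisymm_apply_isSymmetric_eq_zero (hsymm _) hB, smul_zero]
  have hmove : ∀ a, ∑ s, ⟪S (f a) (e s), Y⟫ • B (e s) (S (f a) X) =
      -B (S (f a) X) (S (f a) Y) := fun a => by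
    rw [← LinearMap.neg_apply, ← e.sum_inner_smul_map (-B (S (f a) X))]
    simp only [hsymm _ (e _), LinearMap.neg_apply, ← hB]
  simp only [htrace, hmove, Finset.sum_const_zero, add_zero, Finset.sum_neg_distrib, neg_neg]

end GaussEquation

/-- Algebraic Gauss-equation curvature identity on forms (Proposition 6.3):
with `II : V × V → W` symmetric bilinear, shape operators `S N` determined by
`⟨S N X, Y⟩ = ⟨N, II X Y⟩`, and the curvature
`R(X,Y)Z = −∑_a ⟨S f_a X, Z⟩ S f_a Y + ∑_a ⟨S f_a Y, Z⟩ S f_a X` acting on a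
`(p+1)`-form `ω` as a derivation (with a minus sign), one has, pointwise on tuples:
`∑_s e_s ⌟ (R(e_s, X)·ω) = −∑_a II_{f_a}(X) ⌟ (II_{f_a}^{[p+1]} ω) + II_{nH̃}(X) ⌟ ω`,
where `nH̃ = ∑_s II(e_s, e_s)`. -/
theorem gauss_curvature_term_on_forms {n m p : ℕ} {V W : Type*}
    [NormedAddCommGroup V] [InnerProductSpace ℝ V]
    [NormedAddCommGroup W] [InnerProductSpace ℝ W]
    (e : OrthonormalBasis (Fin n) ℝ V) (f : OrthonormalBasis (Fin m) ℝ W)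
    (II : V →ₗ[ℝ] V →ₗ[ℝ] W) (hII : ∀ X Y, II X Y = II Y X)
    (S : W → V →ₗ[ℝ] V) (hS : ∀ N X Y, ⟪S N X, Y⟫ = ⟪N, II X Y⟫)
    (R : V → V → V →ₗ[ℝ] V)
    (hR : ∀ X Y Z : V, R X Y Z =
      -∑ a : Fin m, ⟪S (f a) X, Z⟫ • S (f a) Y + ∑ a : Fin m, ⟪S (f a) Y, Z⟫ • S (f a) X)
    (ω : V [⋀^Fin (p + 1)]→ₗ[ℝ] ℝ) (X : V) (v : Fin p → V) :
    ∑ s : Fin n,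
        -(∑ j : Fin (p + 1),
          ω (Function.update (Fin.cons (e s) v : Fin (p + 1) → V) j
            (R (e s) X ((Fin.cons (e s) v : Fin (p + 1) → V) j)))) =
      -(∑ a : Fin m, ∑ j : Fin (p + 1),
          ω (Function.update (Fin.cons (S (f a) X) v : Fin (p + 1) → V) j
            (S (f a) ((Fin.cons (S (f a) X) v : Fin (p + 1) → V) j)))) +
        ω (Fin.cons (S (∑ s : Fin n, II (e s) (e s)) X) v) := by
  have hfirst : ∑ s, ω (Fin.cons (R (e s) X (e s)) v) =
      -ω (Fin.cons (S (∑ s, II (e s) (e s)) X) v) + ∑ a, ω (Fin.cons (S (f a) (S (f a) X)) v) := by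
    have hlin : ∀ x, ω (Fin.cons x v) = ω.toMultilinearMap.toLinearMap (Fin.cons 0 v) 0 x :=
      fun x => by simp [Fin.update_cons_zero]
    simp only [hlin, ← map_sum, ← map_neg, ← map_add, sum_curvature_apply_self e f hS hR X]
  have hrest : ∀ i, ∑ s, ω.consUpdate v i (e s) (R (e s) X (v i)) =
      ∑ a, ω.consUpdate v i (S (f a) X) (S (f a) (v i)) := fun i =>
    sum_antisymm_apply_curvature e f hII hS hR (ω.consUpdate_swap v i) X (v i)
  simp only [ω.sum_update_cons, Finset.sum_add_distrib, Finset.sum_neg_distrib]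
  rw [Finset.sum_comm (γ := Fin n), Finset.sum_comm (γ := Fin m), hfirst]
  simp only [hrest]
  abel
end

section
/- Let V be an n-dimensional real inner product space with orthonormal basis e_1,…,e_n and let II_a (a = 1,…,m) be symmetric endomorphisms of V. Assume (∇_X II_N)(Y) = (∇_Y II_N)(X) − II_{∇_Y^⊥ N}(X) + II_{∇_X^⊥ N}(Y) (Codazzi) and ∇_X^⊥ ∂_i^⊥ = −II(X, ∂_i^T). Then the divergence of II_{∂_i^⊥} satisfies δ(II_{∂_i^⊥})(X) = −n X(⟨H̃, ∂_i^⊥⟩) − n ⟨II_{H̃}(∂_i^T), X⟩ + Σ_a ⟨II_{f_a}(∂_i^T), II_{f_a}(X)⟩, where nH̃ is the trace of II. -/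
open scoped RealInnerProductSpace

/-- Algebraic version of Lemma 6.2 (divergence of `II_{∂_i^⊥}`): with `II` the symmetric
second fundamental form, shape operators `S N` with `⟨S N X, Y⟩ = ⟨N, II X Y⟩`,
`t = ∂_i^T`, `D X` the endomorphism `∇_X II_{∂_i^⊥}` (symmetric), satisfying the
Codazzi identity `D X Y = D Y X + S(II Y t) X − S(II X t) Y` (using
`∇_X^⊥ ∂_i^⊥ = −II(X, ∂_i^T)`), and `h` the linear functional `X ↦ X⟨H̃, ∂_i^⊥⟩` with
`∑_s ⟨D X e_s, e_s⟩ = n · h X`, the divergence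
`δ(II_{∂_i^⊥})(X) = −∑_s ⟨D e_s e_s, X⟩` equals
`−n h X − ⟨II_{nH̃}(t), X⟩ + ∑_a ⟨II_{f_a}(t), II_{f_a}(X)⟩`, where `nH̃ = ∑_s II(e_s,e_s)`. -/
theorem divergence_second_fundamental {n m : ℕ} {V W : Type*}
    [NormedAddCommGroup V] [InnerProductSpace ℝ V]
    [NormedAddCommGroup W] [InnerProductSpace ℝ W]
    (e : OrthonormalBasis (Fin n) ℝ V) (f : OrthonormalBasis (Fin m) ℝ W)
    (II : V →ₗ[ℝ] V →ₗ[ℝ] W) (hII : ∀ X Y, II X Y = II Y X)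
    (S : W → V →ₗ[ℝ] V) (hS : ∀ N X Y, ⟪S N X, Y⟫ = ⟪N, II X Y⟫)
    (t : V) (D : V → V →ₗ[ℝ] V) (hDsym : ∀ X, (D X).IsSymmetric)
    (hCodazzi : ∀ X Y, D X Y = D Y X + S (II Y t) X - S (II X t) Y)
    (h : V →ₗ[ℝ] ℝ) (hTrace : ∀ X : V, ∑ s : Fin n, ⟪D X (e s), e s⟫ = (n : ℝ) * h X)
    (X : V) :
    -∑ s : Fin n, ⟪D (e s) (e s), X⟫ =
      -(n : ℝ) * h X - ⟪S (∑ s : Fin n, II (e s) (e s)) t, X⟫ +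
        ∑ a : Fin m, ⟪S (f a) t, S (f a) X⟫ := by
  have hB : ⟪S (∑ s : Fin n, II (e s) (e s)) t, X⟫ =
      ∑ s : Fin n, ⟪S (II X t) (e s), e s⟫ := by
    rw [hS, sum_inner]
    refine Finset.sum_congr rfl fun s _ => ?_
    rw [hS, hII t X]
    exact real_inner_comm _ _
  have hC : ∑ a : Fin m, ⟪S (f a) t, S (f a) X⟫ =
      ∑ s : Fin n, ⟪S (II (e s) t) X, e s⟫ := by
    calc ∑ a : Fin m, ⟪S (f a) t, S (f a) X⟫
        = ∑ a : Fin m, ∑ s : Fin n, ⟪S (f a) t, e s⟫ * ⟪e s, S (f a) X⟫ := by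
          refine Finset.sum_congr rfl fun a _ => ?_
          rw [e.sum_inner_mul_inner]
      _ = ∑ s : Fin n, ∑ a : Fin m, ⟪II t (e s), f a⟫ * ⟪f a, II X (e s)⟫ := by
          rw [Finset.sum_comm]
          refine Finset.sum_congr rfl fun s _ => Finset.sum_congr rfl fun a _ => ?_
          have h2 : (⟪S (f a) t, e s⟫ : ℝ) = ⟪II t (e s), f a⟫ := by
            rw [hS]; exact real_inner_comm _ _
          have h3 : (⟪e s, S (f a) X⟫ : ℝ) = ⟪f a, II X (e s)⟫ := by
            rw [real_inner_comm]; exact hS _ _ _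
          rw [h2, h3]
      _ = ∑ s : Fin n, ⟪II t (e s), II X (e s)⟫ := by
          refine Finset.sum_congr rfl fun s _ => ?_
          rw [f.sum_inner_mul_inner]
      _ = ∑ s : Fin n, ⟪S (II (e s) t) X, e s⟫ := by
          refine Finset.sum_congr rfl fun s _ => ?_
          rw [hS, hII (e s) t]
  have key : ∑ s : Fin n, ⟪D (e s) (e s), X⟫ =
      (n : ℝ) * h X + ⟪S (∑ s : Fin n, II (e s) (e s)) t, X⟫ -
        ∑ a : Fin m, ⟪S (f a) t, S (f a) X⟫ := by
    have h1 : ∀ s : Fin n, ⟪D (e s) (e s), X⟫ =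
        ⟪D X (e s), e s⟫ + ⟪S (II X t) (e s), e s⟫ - ⟪S (II (e s) t) X, e s⟫ := by
      intro s
      rw [real_inner_comm, ← hDsym (e s) X (e s), hCodazzi (e s) X,
        inner_sub_left, inner_add_left]
    rw [Finset.sum_congr rfl fun s _ => h1 s, hB, hC]
    rw [Finset.sum_sub_distrib, Finset.sum_add_distrib, hTrace]
  rw [key]; ring
end
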